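/- arXiv:1805.10070 — 4 statements merged into one kernel-verified Lean document; each statement's English description precedes it below -/
import Mathlib

section
/- Let P be an ordered set of strings and let ←P denote the ordered set of strings whose set is ←P.S = {reverse(s) : s ∈ P.S} with the enumeration reverse(t_1), …, reverse(t_n). Then Dec_Pre computed for ←P is a bijection from Decomp_BWT(←P) onto Prefix(P.S), and under this bijection: (u,v) ∈ A_T(←P) iff Dec_Pre[u] is the longest proper prefix of Dec_Pre[v] in Prefix(P.S) (so (Decomp_BWT(←P), A_T(←P)) is isomorphic to the Aho–Corasick tree ACT(P.S)), and (u,v) ∈ A_F(←P) iff Dec_Pre[v] is the longest proper suffix of Dec_Pre[u] in Prefix(P.S) (so (Decomp_BWT(←P), A_F(←P)) is isomorphic to the Aho–Corasick failure-link graph ACFL(P.S)). -/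
namespace BwtXbw

variable {α β : Type*}

/-- An ordered set of strings: a nonempty list of distinct nonempty strings over `α`
(the list order is the enumeration `t_1, …, t_n`). -/
structure OSS (α : Type*) where
  strs : List (List α)
  strs_ne : strs ≠ []
  nodup : strs.Nodup
  mem_ne : ∀ s ∈ strs, s ≠ []

/-- Embed a symbol of `α` into `WithBot α`; `⊥` plays the role of the separator `$`,
which is smaller than every symbol of the alphabet. -/
def sym (a : α) : WithBot α := (a : WithBot α)

/-- The multi-string `m_P = t_1 $ t_2 $ ⋯ $ t_n $` over `WithBot α`. -/
def mP (P : OSS α) : List (WithBot α) :=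
  (P.strs.map (fun s => s.map sym ++ [⊥])).flatten

/-- `SA` is a (0-based) suffix array for `m`: a bijection of `[0, |m|)` onto itself
listing the suffixes of `m` in increasing lexicographic order. -/
def IsSuffixArray [LinearOrder α] (m : List (WithBot α)) (SA : ℕ → ℕ) : Prop :=
  Set.BijOn SA (Set.Iio m.length) (Set.Iio m.length) ∧
  ∀ i j : ℕ, i < j → j < m.length →
    List.Lex (· < ·) (m.drop (SA i)) (m.drop (SA j))

/-- `LRS(P)[i]` (0-based): number of symbols of `m` from position `SA i` up to (but not
including) the first separator at or after position `SA i`. -/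
def lrs [LinearOrder α] (m : List (WithBot α)) (SA : ℕ → ℕ) (i : ℕ) : ℕ :=
  ((m.drop (SA i)).takeWhile (fun c => decide (c ≠ ⊥))).length

/-- Length of the longest common prefix of two lists. -/
def lcpLen [DecidableEq β] : List β → List β → ℕ
  | a :: s, b :: t => if a = b then lcpLen s t + 1 else 0
  | _, _ => 0

/-- `LCP(P)[i] = min(LCP(m_P)[i], LRS(P)[i])` (0-based; `0` at `i = 0`). -/
def lcpP [LinearOrder α] (m : List (WithBot α)) (SA : ℕ → ℕ) (i : ℕ) : ℕ :=
  if i = 0 then 0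
  else min (lcpLen (m.drop (SA (i - 1))) (m.drop (SA i))) (lrs m SA i)

/-- `Decomp_BWT(P)`: the maximal integer intervals `[u.1, u.2] ⊆ [0, |m|)` such that
`LCP(P)[k] = LRS(P)[k]` for every interior position `k ∈ [u.1+1, u.2]`. -/
def DecompBWT [LinearOrder α] (m : List (WithBot α)) (SA : ℕ → ℕ) : Set (ℕ × ℕ) :=
  { u | u.1 ≤ u.2 ∧ u.2 < m.length ∧
        (∀ k, u.1 < k → k ≤ u.2 → lcpP m SA k = lrs m SA k) ∧
        (u.1 = 0 ∨ lcpP m SA u.1 ≠ lrs m SA u.1) ∧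
        (u.2 + 1 = m.length ∨ lcpP m SA (u.2 + 1) ≠ lrs m SA (u.2 + 1)) }

/-- `Dec_Pre[u]`: the reverse of `m[SA u.1 .. SA u.1 + LRS[u.1] − 1]`. -/
def decPre [LinearOrder α] (m : List (WithBot α)) (SA : ℕ → ℕ) (u : ℕ × ℕ) :
    List (WithBot α) :=
  ((m.drop (SA u.1)).take (lrs m SA u.1)).reverse

/-- `Prefix(←P.S)`: all prefixes (including the empty string) of the reversed strings of
`P.S`, viewed inside `WithBot α`. -/
def revPrefixes (P : OSS α) : Set (List (WithBot α)) :=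
  { p | ∃ s ∈ P.strs, p <+: s.reverse.map sym }

/-- `Prefix(P.S)`: all prefixes (including the empty string) of the strings of `P.S`,
viewed inside `WithBot α`. -/
def fwdPrefixes (P : OSS α) : Set (List (WithBot α)) :=
  { p | ∃ s ∈ P.strs, p <+: s.map sym }

/-- `BWT(P)[i]` (0-based): `m[SA i − 1]` if `SA i > 0`, and the last symbol `$ = ⊥`
of `m` otherwise. -/
def bwtArr (m : List (WithBot α)) (SA : ℕ → ℕ) (i : ℕ) : WithBot α :=
  if SA i = 0 then ⊥ else m.getD (SA i - 1) ⊥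

/-- `C[c]`: the number of positions of `m` holding a symbol strictly smaller than `c`. -/
def Cfun [LinearOrder α] (m : List (WithBot α)) (c : WithBot α) : ℕ :=
  (m.filter (fun b => decide (b < c))).length

/-- The Last-to-First mapping (0-based):
`LF[i] = C[BWT[i]] + #{k < i : BWT[k] = BWT[i]}`. -/
def LF [LinearOrder α] (m : List (WithBot α)) (SA : ℕ → ℕ) (i : ℕ) : ℕ :=
  Cfun m (bwtArr m SA i) +
    ((List.range i).filter (fun k => decide (bwtArr m SA k = bwtArr m SA i))).length

/-- The arc set `A_T(P)` on `Decomp_BWT(P)`. -/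
def AT [LinearOrder α] (m : List (WithBot α)) (SA : ℕ → ℕ) :
    Set ((ℕ × ℕ) × (ℕ × ℕ)) :=
  { uv | uv.1 ∈ DecompBWT m SA ∧ uv.2 ∈ DecompBWT m SA ∧
      ∃ x, uv.1.1 ≤ x ∧ x ≤ uv.1.2 ∧ bwtArr m SA x ≠ ⊥ ∧
        uv.2.1 ≤ LF m SA x ∧ LF m SA x ≤ uv.2.2 }

/-- Arc relation of the Aho–Corasick tree on the vertex set `Pref`:
`p` is the longest proper prefix of `q` belonging to `Pref`. -/
def ACTedge (Pref : Set (List β)) (p q : List β) : Prop :=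
  p ∈ Pref ∧ q ∈ Pref ∧ p ≠ q ∧ p <+: q ∧
    ∀ r ∈ Pref, r ≠ q → r <+: q → r.length ≤ p.length

/-- `k` is a failure candidate for the position `i`: `k < i` and
`LRS[k] ≤ LCP[l]` for all `l ∈ [k+1, i]`. -/
def FailCand [LinearOrder α] (m : List (WithBot α)) (SA : ℕ → ℕ) (i k : ℕ) : Prop :=
  k < i ∧ ∀ l, k < l → l ≤ i → lrs m SA k ≤ lcpP m SA l

/-- The arc set `A_F(P)` on `Decomp_BWT(P)`: the largest failure candidate for `u.1`
exists and lies in `v`. -/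
def AF [LinearOrder α] (m : List (WithBot α)) (SA : ℕ → ℕ) :
    Set ((ℕ × ℕ) × (ℕ × ℕ)) :=
  { uv | uv.1 ∈ DecompBWT m SA ∧ uv.2 ∈ DecompBWT m SA ∧
      ∃ k, FailCand m SA uv.1.1 k ∧ (∀ k', FailCand m SA uv.1.1 k' → k' ≤ k) ∧
        uv.2.1 ≤ k ∧ k ≤ uv.2.2 }

/-- Arc relation of the Aho–Corasick failure-link graph on the vertex set `Pref`:
`q` is the longest proper suffix of `p` belonging to `Pref`. -/
def ACFLedge (Pref : Set (List β)) (p q : List β) : Prop :=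
  p ∈ Pref ∧ q ∈ Pref ∧ p ≠ q ∧ q <:+ p ∧
    ∀ r ∈ Pref, r ≠ p → r <:+ p → r.length ≤ q.length

/-- The Run-Length measure `d_B(P) = #{i : BWT[i] ≠ BWT[i+1]}` (0-based, `i` ranging
over the first `|m| − 1` positions). -/
def dB [LinearOrder α] (m : List (WithBot α)) (SA : ℕ → ℕ) : ℕ :=
  ((List.range (m.length - 1)).filter
      (fun i => decide (bwtArr m SA i ≠ bwtArr m SA (i + 1)))).length

/-- `P` is topologically planar: for every prefix `p` of the reverse of some string of
`P.S`, the indices `r` with `p` a prefix of `reverse(t_r)` form a set of consecutive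
integers. -/
def TopPlanar [DecidableEq α] (P : OSS α) : Prop :=
  ∀ p : List α, (∃ s ∈ P.strs, p <+: s.reverse) →
    ∀ r₁ r₂ r₃ : ℕ, r₁ ≤ r₂ → r₂ ≤ r₃ → r₃ < P.strs.length →
      p <+: (P.strs.getD r₁ []).reverse → p <+: (P.strs.getD r₃ []).reverse →
      p <+: (P.strs.getD r₂ []).reverse

/-- `Letter[i]`: the first symbol of the suffix of rank `i`, i.e. `m[SA i]`. -/
def letterArr (m : List (WithBot α)) (SA : ℕ → ℕ) (i : ℕ) : WithBot α :=
  m.getD (SA i) ⊥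

/-- 0-based select: the position of the `(j+1)`-st occurrence of `c` in
`f 0, f 1, …, f (N−1)`. -/
def select0 [LinearOrder α] (f : ℕ → WithBot α) (N : ℕ) (c : WithBot α) (j : ℕ) : ℕ :=
  (((List.range N).filter (fun k => decide (f k = c)))).getD j 0

/-- The inverse Last-to-First mapping (0-based):
`RLF[i] = select_{Letter[i]}(BWT, i − C[Letter[i]])`. -/
def RLF [LinearOrder α] (m : List (WithBot α)) (SA : ℕ → ℕ) (i : ℕ) : ℕ :=
  select0 (bwtArr m SA) m.length (letterArr m SA i)
    (i - Cfun m (letterArr m SA i))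

/-- `d_A(T') = #{i : T'[i] ≠ T'[i+1]}`, the number of adjacent mismatches. -/
def dA [DecidableEq β] : List β → ℕ
  | a :: b :: t => (if a = b then 0 else 1) + dA (b :: t)
  | _ => 0

/-- `T'` is valid for the block decomposition `B` (an interval partition given by the
lengths of the blocks): `T'` splits into blocks of the same lengths as those of `B`,
with the same symbol set blockwise. -/
def ValidArr [DecidableEq β] (B : List (List β)) (T' : List β) : Prop :=
  ∃ B' : List (List β),
    List.Forall₂ (fun b b' => b.length = b'.length ∧ b.toFinset = b'.toFinset) B B' ∧
    B'.flatten = T'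

/-- `T'` is optimal for the block decomposition `B`: valid and of minimal `d_A`. -/
def OptimalArr [DecidableEq β] (B : List (List β)) (T' : List β) : Prop :=
  ValidArr B T' ∧ ∀ T'' : List β, ValidArr B T'' → dA T' ≤ dA T''

/-!
In the text `m` of `←P` every suffix starts with a separator-free word followed by `$`, and
these words are exactly the suffixes of the strings of `←P`, i.e. the reversed prefixes of
`P.S`. Since `$` is the smallest symbol, the suffixes reading a given word occupy a run of
consecutive ranks, and `LCP(←P)[k] = LRS(←P)[k]` says precisely that ranks `k - 1` and `k`
read the same word. Hence `Decomp_BWT(←P)` is the partition into these runs and `Dec_Pre` is a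
bijection onto `Prefix(P.S)`. `LF` sends a rank to the rank of the suffix starting one position
earlier, so it prepends the `BWT` symbol to the word: after reversal this appends one letter,
which is the tree arc. A failure candidate of a run is a rank reading a proper prefix of its
word, and among prefixes of one word a larger rank reads a longer word, so the largest
candidate reads the longest proper prefix: after reversal, the longest proper suffix.
-/

open scoped Finset

section Lists

variable {γ : Type*}

theorem lcpLen_comm [DecidableEq γ] : ∀ s t : List γ, lcpLen s t = lcpLen t s
  | [], [] | [], _ :: _ | _ :: _, [] => rfl
  | a :: s, b :: t => by
    by_cases h : a = b
    · simp [lcpLen, h, lcpLen_comm s t]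
    · simp [lcpLen, h, Ne.symm h]

theorem length_le_lcpLen_iff [DecidableEq γ] :
    ∀ {p s t : List γ}, p <+: s → (p.length ≤ lcpLen s t ↔ p <+: t)
  | [], _, _, _ => by simp
  | c :: p, _, [], ⟨s, rfl⟩ => by simp [lcpLen]
  | c :: p, _, b :: t, ⟨s, rfl⟩ => by
    by_cases h : c = b
    · subst h
      simpa [lcpLen] using length_le_lcpLen_iff (t := t) (p.prefix_append s)
    · simp [lcpLen, h]

theorem prefix_takeWhile_of_prefix {pred : γ → Bool} {p l : List γ} (h : p <+: l)
    (hp : ∀ c ∈ p, pred c = true) : p <+: l.takeWhile pred := by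
  obtain ⟨r, rfl⟩ := h
  rw [List.takeWhile_append, if_pos (by rw [List.takeWhile_eq_self_iff.2 hp])]
  exact p.prefix_append _

theorem length_filter_eq_card_filter_range (d : γ) (q : γ → Bool) :
    ∀ l : List γ, (l.filter q).length = #{p ∈ Finset.range l.length | q (l.getD p d)}
  | [] => rfl
  | a :: l => by
    rw [Finset.card_filter, List.length_cons, Finset.sum_range_succ', ← Finset.card_filter]
    simp only [List.getD_cons_succ, List.getD_cons_zero,
      ← length_filter_eq_card_filter_range d q l]
    cases h : q a <;> simp [h]

variable [LinearOrder γ]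

theorem prefix_of_lt_of_lt :
    ∀ {p a b c : List γ}, p <+: a → p <+: c → a < b → b < c → p <+: b
  | [], _, _, _, _, _, _, _ => List.nil_prefix
  | _ :: _, _, [], _, _, _, hab, _ => absurd hab (List.not_lt_nil _)
  | x :: p, _, y :: b, _, ⟨a, rfl⟩, ⟨c, rfl⟩, hab, hbc => by
    rw [List.cons_append, List.cons_lt_cons_iff] at hab hbc
    rcases hab with hxy | ⟨rfl, hab⟩
    · rcases hbc with hyx | ⟨rfl, -⟩
      exacts [absurd hxy hyx.asymm, absurd hxy (lt_irrefl _)]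
    · rcases hbc with hyx | ⟨-, hbc⟩
      · exact absurd hyx (lt_irrefl _)
      · exact List.cons_prefix_cons.2
          ⟨rfl, prefix_of_lt_of_lt (p.prefix_append a) (p.prefix_append c) hab hbc⟩

end Lists

section MultiString

theorem mP_getLast? (Q : OSS α) : (mP Q).getLast? = some ⊥ := by
  obtain ⟨L, s, hs⟩ := (List.eq_nil_or_concat Q.strs).resolve_left Q.strs_ne
  simp [mP, hs]

theorem bot_notMem_of_suffix_map_sym {w : List (WithBot α)} {s : List α}
    (h : w <:+ s.map sym) : ⊥ ∉ w := fun hw => by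
  simpa [sym] using h.subset hw

variable [LinearOrder α]

theorem exists_eq_takeWhile_append_bot :
    ∀ {l : List (WithBot α)}, ⊥ ∈ l →
      ∃ rest, l = l.takeWhile (fun c => decide (c ≠ ⊥)) ++ ⊥ :: rest
  | a :: l, h => by
    by_cases ha : a = ⊥
    · exact ⟨l, by simp [ha]⟩
    · obtain ⟨rest, hrest⟩ := exists_eq_takeWhile_append_bot
        ((List.mem_cons.1 h).resolve_left (Ne.symm ha))
      exact ⟨rest, by rw [List.takeWhile_cons_of_pos (by simpa using ha), List.cons_append,
        ← hrest]⟩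

theorem takeWhile_append_bot {w : List (WithBot α)} (hw : ⊥ ∉ w) (rest : List (WithBot α)) :
    (w ++ ⊥ :: rest).takeWhile (fun c => decide (c ≠ ⊥)) = w := by
  rw [List.takeWhile_append, if_pos, List.takeWhile_cons_of_neg (by simp), List.append_nil]
  exact congrArg List.length
    (List.takeWhile_eq_self_iff.2 fun c hc => by simpa using ne_of_mem_of_not_mem hc hw)

theorem exists_drop_flatten_eq_iff {w : List (WithBot α)} (hw : ⊥ ∉ w) :
    ∀ L : List (List α),
      (∃ p < ((L.map (fun s => s.map sym ++ [⊥])).flatten).length, ∃ rest,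
        ((L.map (fun s => s.map sym ++ [⊥])).flatten).drop p = w ++ ⊥ :: rest) ↔
      ∃ s ∈ L, w <:+ s.map sym
  | [] => by simp
  | s :: L => by
    have hlen : (s.map sym ++ [⊥]).length = s.length + 1 := by simp
    simp only [List.map_cons, List.flatten_cons, List.mem_cons, exists_eq_or_imp,
      ← exists_drop_flatten_eq_iff hw L]
    constructor
    · rintro ⟨p, hp, rest, hdrop⟩
      by_cases hps : p ≤ s.length
      · left
        rw [List.append_assoc, List.singleton_append, List.drop_append,
          Nat.sub_eq_zero_of_le (by simpa using hps), List.drop_zero] at hdrop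
        have hw' := congrArg (List.takeWhile (fun c => decide (c ≠ ⊥))) hdrop
        rw [takeWhile_append_bot hw, takeWhile_append_bot
          (bot_notMem_of_suffix_map_sym (List.drop_suffix _ _))] at hw'
        exact hw' ▸ List.drop_suffix _ _
      · right
        refine ⟨p - (s.length + 1), by rw [List.length_append, hlen] at hp; omega, rest, ?_⟩
        rwa [List.drop_append, List.drop_eq_nil_of_le (by simp; omega), hlen,
          List.nil_append] at hdrop
    · rintro (⟨pre, hpre⟩ | ⟨p, hp, rest, hdrop⟩)
      · refine ⟨pre.length, ?_, (L.map (fun s => s.map sym ++ [⊥])).flatten, ?_⟩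
        · have := congrArg List.length hpre
          simp only [List.length_append, List.length_map, List.length_singleton] at this ⊢
          omega
        · rw [← hpre, List.append_assoc, List.append_assoc, List.drop_append_length,
            List.singleton_append]
      · refine ⟨(s.map sym ++ [⊥]).length + p, by simp only [List.length_append]; omega,
          rest, ?_⟩
        rwa [List.drop_length_add_append]

end MultiString

section SuffixArray

variable [LinearOrder α] {m : List (WithBot α)} {SA : ℕ → ℕ} {i j k : ℕ}

/-- The word `m[SA i .. SA i + LRS[i] − 1]` read at rank `i`. -/
def strAt (m : List (WithBot α)) (SA : ℕ → ℕ) (i : ℕ) : List (WithBot α) :=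
  (m.drop (SA i)).takeWhile (fun c => decide (c ≠ ⊥))

theorem lrs_eq_length_strAt : lrs m SA i = (strAt m SA i).length := rfl

theorem decPre_eq_reverse_strAt (u : ℕ × ℕ) : decPre m SA u = (strAt m SA u.1).reverse := by
  rw [decPre, lrs_eq_length_strAt, strAt,
    ← List.prefix_iff_eq_take.1 (List.takeWhile_prefix _)]

theorem strAt_prefix_drop : strAt m SA i <+: m.drop (SA i) := List.takeWhile_prefix _

theorem bot_notMem_strAt : ⊥ ∉ strAt m SA i := fun h => by
  simpa using List.mem_takeWhile_imp h

theorem prefix_strAt_of_prefix_drop {p : List (WithBot α)} (hp : ⊥ ∉ p)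
    (h : p <+: m.drop (SA i)) : p <+: strAt m SA i :=
  prefix_takeWhile_of_prefix h fun c hc => by simpa using ne_of_mem_of_not_mem hc hp

theorem exists_drop_eq_strAt_append (hm : m.getLast? = some ⊥) (hi : SA i < m.length) :
    ∃ rest, m.drop (SA i) = strAt m SA i ++ ⊥ :: rest := by
  refine exists_eq_takeWhile_append_bot (List.mem_of_getLast? (a := ⊥) ?_)
  rw [List.getLast?_drop, if_neg (not_le.2 hi), hm]

theorem drop_lt_drop_of_strAt_prefix (hm : m.getLast? = some ⊥) (hk : SA k < m.length)
    (h : strAt m SA k <+: strAt m SA i) (hne : strAt m SA k ≠ strAt m SA i) :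
    m.drop (SA k) < m.drop (SA i) := by
  obtain ⟨_ | ⟨d, r⟩, hr⟩ := h
  · exact absurd (by simpa using hr) hne
  obtain ⟨rest, hk'⟩ := exists_drop_eq_strAt_append hm hk
  obtain ⟨t, hi'⟩ : strAt m SA i <+: m.drop (SA i) := strAt_prefix_drop
  have hd : d ≠ ⊥ := fun hd => bot_notMem_strAt (by rw [← hr, hd]; simp)
  rw [hk', ← hi', ← hr, List.append_assoc, List.cons_append]
  exact List.append_left_lt (List.cons_lt_cons_iff.2 (Or.inl (bot_lt_iff_ne_bot.2 hd)))

namespace IsSuffixArray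

theorem SA_lt (hSA : IsSuffixArray m SA) (hi : i < m.length) : SA i < m.length :=
  hSA.1.mapsTo hi

theorem exists_SA_eq (hSA : IsSuffixArray m SA) {p : ℕ} (hp : p < m.length) :
    ∃ i < m.length, SA i = p :=
  hSA.1.surjOn hp

theorem lt_iff_drop_lt (hSA : IsSuffixArray m SA) (hi : i < m.length) (hj : j < m.length) :
    m.drop (SA i) < m.drop (SA j) ↔ i < j :=
  StrictMonoOn.lt_iff_lt (f := fun i => m.drop (SA i)) (fun i _ j hj hij => hSA.2 i j hij hj)
    hi hj

theorem prefix_drop_of_le_of_le (hSA : IsSuffixArray m SA) {p : List (WithBot α)}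
    (hik : i ≤ k) (hkj : k ≤ j) (hj : j < m.length)
    (hpi : p <+: m.drop (SA i)) (hpj : p <+: m.drop (SA j)) : p <+: m.drop (SA k) := by
  rcases hik.eq_or_lt with rfl | hik
  · exact hpi
  rcases hkj.eq_or_lt with rfl | hkj
  · exact hpj
  exact prefix_of_lt_of_lt hpi hpj ((hSA.lt_iff_drop_lt (by omega) (by omega)).2 hik)
    ((hSA.lt_iff_drop_lt (by omega) hj).2 hkj)

theorem lt_of_strAt_prefix (hSA : IsSuffixArray m SA) (hm : m.getLast? = some ⊥)
    (hk : k < m.length) (hi : i < m.length) (h : strAt m SA k <+: strAt m SA i)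
    (hne : strAt m SA k ≠ strAt m SA i) : k < i :=
  (hSA.lt_iff_drop_lt hk hi).1 (drop_lt_drop_of_strAt_prefix hm (hSA.SA_lt hk) h hne)

theorem strAt_eq_of_prefix_drop (hSA : IsSuffixArray m SA) (hm : m.getLast? = some ⊥)
    (hij : i ≤ j) (hj : j < m.length) (h : strAt m SA j <+: m.drop (SA i)) :
    strAt m SA i = strAt m SA j := by
  by_contra hne
  have := hSA.lt_of_strAt_prefix hm hj (by omega)
    (prefix_strAt_of_prefix_drop bot_notMem_strAt h) (Ne.symm hne)
  omega

theorem strAt_eq_of_le_of_le (hSA : IsSuffixArray m SA) (hm : m.getLast? = some ⊥)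
    (hik : i ≤ k) (hkj : k ≤ j) (hj : j < m.length) (h : strAt m SA i = strAt m SA j) :
    strAt m SA k = strAt m SA j :=
  hSA.strAt_eq_of_prefix_drop hm hkj hj <| hSA.prefix_drop_of_le_of_le hik hkj hj
    (h ▸ strAt_prefix_drop) strAt_prefix_drop

theorem exists_strAt_eq_iff (hSA : IsSuffixArray m SA) (hm : m.getLast? = some ⊥)
    {w : List (WithBot α)} (hw : ⊥ ∉ w) :
    (∃ i < m.length, strAt m SA i = w) ↔
      ∃ p < m.length, ∃ rest, m.drop p = w ++ ⊥ :: rest := by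
  constructor
  · rintro ⟨i, hi, rfl⟩
    exact ⟨SA i, hSA.SA_lt hi, exists_drop_eq_strAt_append hm (hSA.SA_lt hi)⟩
  · rintro ⟨p, hp, rest, hdrop⟩
    obtain ⟨i, hi, rfl⟩ := hSA.exists_SA_eq hp
    exact ⟨i, hi, by rw [strAt, hdrop, takeWhile_append_bot hw]⟩

theorem lcpP_eq_lrs_iff (hSA : IsSuffixArray m SA) (hm : m.getLast? = some ⊥)
    (hk0 : k ≠ 0) (hk : k < m.length) :
    lcpP m SA k = lrs m SA k ↔ strAt m SA (k - 1) = strAt m SA k := by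
  rw [lcpP, if_neg hk0, min_eq_right_iff, lrs_eq_length_strAt, lcpLen_comm,
    length_le_lcpLen_iff strAt_prefix_drop]
  exact ⟨hSA.strAt_eq_of_prefix_drop hm (by omega) hk, fun h => h ▸ strAt_prefix_drop⟩

end IsSuffixArray

theorem length_le_lcpP_iff {p : List (WithBot α)} (hk0 : k ≠ 0) (hp : ⊥ ∉ p)
    (hpre : p <+: m.drop (SA (k - 1))) : p.length ≤ lcpP m SA k ↔ p <+: m.drop (SA k) := by
  rw [lcpP, if_neg hk0, le_min_iff, length_le_lcpLen_iff hpre, lrs_eq_length_strAt]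
  exact ⟨And.left, fun h => ⟨h, (prefix_strAt_of_prefix_drop hp h).length_le⟩⟩

theorem IsSuffixArray.failCand_iff (hSA : IsSuffixArray m SA) (hi : i < m.length) :
    FailCand m SA i k ↔ k < i ∧ strAt m SA k <+: strAt m SA i := by
  refine ⟨fun ⟨hki, hcand⟩ => ⟨hki, ?_⟩,
    fun ⟨hki, hpre⟩ => ⟨hki, fun l hkl hli => ?_⟩⟩
  · have hdrop : ∀ l, k ≤ l → l ≤ i → strAt m SA k <+: m.drop (SA l) := by
      intro l hkl hli
      induction l, hkl using Nat.le_induction with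
      | base => exact strAt_prefix_drop
      | succ l hkl ih =>
        exact (length_le_lcpP_iff (Nat.add_one_ne_zero l) bot_notMem_strAt (ih (by omega))).1
          (hcand (l + 1) (by omega) hli)
    exact prefix_strAt_of_prefix_drop bot_notMem_strAt (hdrop i hki.le le_rfl)
  · have hpi : strAt m SA k <+: m.drop (SA i) := hpre.trans strAt_prefix_drop
    exact (length_le_lcpP_iff (by omega) bot_notMem_strAt
      (hSA.prefix_drop_of_le_of_le (by omega) (by omega) hi strAt_prefix_drop hpi)).2
      (hSA.prefix_drop_of_le_of_le hkl.le hli hi strAt_prefix_drop hpi)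

end SuffixArray

section Decomposition

variable [LinearOrder α] {m : List (WithBot α)} {SA : ℕ → ℕ} {u v : ℕ × ℕ} {k : ℕ}

theorem fst_lt_length_of_mem_DecompBWT (hu : u ∈ DecompBWT m SA) : u.1 < m.length :=
  hu.1.trans_lt hu.2.1

namespace IsSuffixArray

theorem mem_Icc_iff_strAt_eq (hSA : IsSuffixArray m SA) (hm : m.getLast? = some ⊥)
    (hu : u ∈ DecompBWT m SA) (hk : k < m.length) :
    k ∈ Set.Icc u.1 u.2 ↔ strAt m SA k = strAt m SA u.1 := by
  obtain ⟨h12, hu2, hinner, hleft, hright⟩ := hu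
  have hconst : ∀ k, u.1 ≤ k → k ≤ u.2 → strAt m SA k = strAt m SA u.1 := by
    intro k h1 h2
    induction k, h1 using Nat.le_induction with
    | base => rfl
    | succ k hk ih =>
      rw [← ih (by omega), ← (hSA.lcpP_eq_lrs_iff hm (Nat.add_one_ne_zero k) (by omega)).1
        (hinner (k + 1) (by omega) h2), Nat.add_sub_cancel]
  refine ⟨fun h => hconst k h.1 h.2, fun h => ⟨?_, ?_⟩⟩
  · by_contra! hlt
    refine hleft.elim (by omega) fun hne => hne ?_
    refine (hSA.lcpP_eq_lrs_iff hm (by omega) (by omega)).2 ?_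
    rw [hSA.strAt_eq_of_le_of_le hm (by omega : k ≤ u.1 - 1) (by omega) (by omega) h]
  · by_contra! hlt
    refine hright.elim (by omega) fun hne => hne ?_
    refine (hSA.lcpP_eq_lrs_iff hm (by omega) (by omega)).2 ?_
    rw [Nat.add_sub_cancel, hconst u.2 (by omega) le_rfl,
      hSA.strAt_eq_of_le_of_le hm (by omega : u.1 ≤ u.2 + 1) hlt hk h.symm, h]

theorem exists_mem_DecompBWT (hSA : IsSuffixArray m SA) (hm : m.getLast? = some ⊥)
    (hk : k < m.length) : ∃ u ∈ DecompBWT m SA, strAt m SA u.1 = strAt m SA k := by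
  classical
  let P z := strAt m SA z = strAt m SA k
  have hex : ∃ z, P z := ⟨k, rfl⟩
  set i := Nat.find hex
  set j := Nat.findGreatest P (m.length - 1)
  have hi : P i := Nat.find_spec hex
  have hik : i ≤ k := Nat.find_min' hex rfl
  have hj : P j := Nat.findGreatest_spec (by omega : k ≤ m.length - 1) rfl
  have hkj : k ≤ j := Nat.le_findGreatest (by omega) rfl
  have hjN : j < m.length := by have := Nat.findGreatest_le (P := P) (m.length - 1); omega
  have hmid : ∀ l, i ≤ l → l ≤ j → P l := fun l h1 h2 =>
    (hSA.strAt_eq_of_le_of_le hm h1 h2 hjN (hi.trans hj.symm)).trans hj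
  refine ⟨(i, j), ⟨by omega, hjN, fun l h1 h2 => ?_, ?_, ?_⟩, hi⟩
  · exact (hSA.lcpP_eq_lrs_iff hm (by omega) (by omega)).2
      ((hmid (l - 1) (by omega) (by omega)).trans (hmid l (by omega) h2).symm)
  · refine or_iff_not_imp_left.2 fun hi0 heq => Nat.find_min hex (by omega : i - 1 < i) ?_
    exact ((hSA.lcpP_eq_lrs_iff hm hi0 (by omega)).1 heq).trans hi
  · refine or_iff_not_imp_left.2 fun hjN' heq => ?_
    have hsucc := (hSA.lcpP_eq_lrs_iff hm (Nat.add_one_ne_zero j) (by omega)).1 heq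
    rw [Nat.add_sub_cancel] at hsucc
    exact Nat.findGreatest_is_greatest (Nat.lt_succ_self j) (by omega) (hsucc.symm.trans hj)

theorem eq_of_strAt_eq (hSA : IsSuffixArray m SA) (hm : m.getLast? = some ⊥)
    (hu : u ∈ DecompBWT m SA) (hv : v ∈ DecompBWT m SA)
    (h : strAt m SA u.1 = strAt m SA v.1) : u = v := by
  have hu1 := (hSA.mem_Icc_iff_strAt_eq hm hv (fst_lt_length_of_mem_DecompBWT hu)).2 h
  have hv1 := (hSA.mem_Icc_iff_strAt_eq hm hu (fst_lt_length_of_mem_DecompBWT hv)).2 h.symm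
  have hu2 := (hSA.mem_Icc_iff_strAt_eq hm hv hu.2.1).2
    (((hSA.mem_Icc_iff_strAt_eq hm hu hu.2.1).1 ⟨hu.1, le_rfl⟩).trans h)
  have hv2 := (hSA.mem_Icc_iff_strAt_eq hm hu hv.2.1).2
    (((hSA.mem_Icc_iff_strAt_eq hm hv hv.2.1).1 ⟨hv.1, le_rfl⟩).trans h.symm)
  simp only [Set.mem_Icc] at hu1 hv1 hu2 hv2
  exact Prod.ext (by omega) (by omega)

end IsSuffixArray

end Decomposition

section LastToFirst

variable {m : List (WithBot α)} {SA : ℕ → ℕ} {a b x y : ℕ}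

theorem drop_eq_letterArr_cons (ha : SA a < m.length) :
    m.drop (SA a) = letterArr m SA a :: m.drop (SA a + 1) := by
  rw [List.drop_eq_getElem_cons ha, letterArr, List.getD_eq_getElem _ _ ha]

theorem bwtArr_eq_letterArr (h : SA b = SA a + 1) : bwtArr m SA b = letterArr m SA a := by
  rw [bwtArr, if_neg (by omega), h, Nat.add_sub_cancel, letterArr]

theorem SA_add_one_lt_length (hm : m.getLast? = some ⊥) (ha : SA a < m.length)
    (hc : letterArr m SA a ≠ ⊥) : SA a + 1 < m.length := by
  refine lt_of_le_of_ne ha fun hlast => hc ?_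
  rw [List.getLast?_eq_getElem?, ← hlast, Nat.add_sub_cancel, List.getElem?_eq_getElem ha,
    Option.some_inj] at hm
  rw [letterArr, List.getD_eq_getElem _ _ ha, hm]

variable [LinearOrder α]

namespace IsSuffixArray

theorem letterArr_mono (hSA : IsSuffixArray m SA) (hab : a ≤ b) (hb : b < m.length) :
    letterArr m SA a ≤ letterArr m SA b := by
  rcases hab.eq_or_lt with rfl | hab
  · exact le_rfl
  have hlt := (hSA.lt_iff_drop_lt (by omega) hb).2 hab
  rw [drop_eq_letterArr_cons (hSA.SA_lt (hab.trans hb)), drop_eq_letterArr_cons (hSA.SA_lt hb)]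
    at hlt
  exact List.head_le_of_lt hlt

theorem card_letterArr_lt (hSA : IsSuffixArray m SA) (c : WithBot α) :
    #{z ∈ Finset.range m.length | letterArr m SA z < c} = Cfun m c := by
  rw [Cfun, length_filter_eq_card_filter_range ⊥]
  refine Finset.card_nbij SA (fun z hz => ?_) (fun z hz z' hz' h => ?_) (fun p hp => ?_)
  all_goals simp only [Finset.coe_filter, Finset.mem_range, Set.mem_ofPred_eq] at *
  · exact ⟨hSA.SA_lt hz.1, by simpa [letterArr] using hz.2⟩
  · exact hSA.1.injOn hz.1 hz'.1 h
  · obtain ⟨z, hz, rfl⟩ := hSA.exists_SA_eq hp.1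
    exact ⟨z, ⟨hz, by simpa [letterArr] using hp.2⟩, rfl⟩

theorem Cfun_add_card_letterArr_eq (hSA : IsSuffixArray m SA) (hy : y < m.length) :
    Cfun m (letterArr m SA y) + #{z ∈ Finset.range y | letterArr m SA z = letterArr m SA y}
      = y := by
  have hlt : #{z ∈ Finset.range m.length | letterArr m SA z < letterArr m SA y}
      = #{z ∈ Finset.range y | letterArr m SA z < letterArr m SA y} := by
    congr 1
    ext z
    simp only [Finset.mem_filter, Finset.mem_range]
    refine ⟨fun ⟨hz, hzy⟩ => ⟨?_, hzy⟩, fun ⟨hz, hzy⟩ => ⟨by omega, hzy⟩⟩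
    by_contra! hyz
    exact (hSA.letterArr_mono hyz hz).not_gt hzy
  have heq : #{z ∈ Finset.range y | letterArr m SA z = letterArr m SA y}
      = #{z ∈ Finset.range y | ¬ letterArr m SA z < letterArr m SA y} := by
    refine congrArg _ (Finset.filter_congr fun z hz => ?_)
    have := hSA.letterArr_mono (Finset.mem_range.1 hz).le hy
    constructor <;> intro h
    exacts [h.not_lt, (not_lt.1 h).antisymm' this]
  rw [← hSA.card_letterArr_lt, hlt, heq, Finset.card_filter_add_card_filter_not,
    Finset.card_range]

theorem lt_iff_lt_of_SA_eq_add_one {a' b' : ℕ} (hSA : IsSuffixArray m SA)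
    (ha : a < m.length) (hb : b < m.length) (ha' : a' < m.length) (hb' : b' < m.length)
    (hA : SA a' = SA a + 1) (hB : SA b' = SA b + 1) (hl : letterArr m SA a = letterArr m SA b) :
    a < b ↔ a' < b' := by
  rw [← hSA.lt_iff_drop_lt ha hb, ← hSA.lt_iff_drop_lt ha' hb',
    drop_eq_letterArr_cons (hSA.SA_lt ha), drop_eq_letterArr_cons (hSA.SA_lt hb), hl,
    List.cons_lt_cons_self, hA, hB]

/-- `z ↦ SA⁻¹ (SA z + 1)` is a bijection between the two sets, with inverse
`k ↦ SA⁻¹ (SA k - 1)`; it preserves the rank order because prepending a common letter preserves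
the lexicographic order. -/
theorem card_letterArr_eq_eq_card_bwtArr_eq (hSA : IsSuffixArray m SA)
    (hm : m.getLast? = some ⊥) (hx : x < m.length) (hy : y < m.length)
    (hxy : SA x = SA y + 1) (hc : letterArr m SA y ≠ ⊥) :
    #{z ∈ Finset.range y | letterArr m SA z = letterArr m SA y}
      = #{k ∈ Finset.range x | bwtArr m SA k = bwtArr m SA x} := by
  obtain ⟨hleft, hright⟩ := hSA.1.invOn_invFunOn
  have hmaps := hSA.1.surjOn.mapsTo_invFunOn
  set r := Function.invFunOn SA (Set.Iio m.length)
  have hz : ∀ z ∈ Finset.range y, letterArr m SA z = letterArr m SA y →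
      z < m.length ∧ SA z + 1 < m.length := fun z hz hzc => by
    have hzN : z < m.length := (Finset.mem_range.1 hz).trans hy
    exact ⟨hzN, SA_add_one_lt_length hm (hSA.SA_lt hzN) (hzc ▸ hc)⟩
  have hk : ∀ k ∈ Finset.range x, bwtArr m SA k = letterArr m SA y →
      k < m.length ∧ SA k - 1 < m.length ∧ SA k = SA (r (SA k - 1)) + 1 := fun k hk hkc => by
    have hkN : k < m.length := (Finset.mem_range.1 hk).trans hx
    have h0 : SA k ≠ 0 := fun h => hc (by rw [← hkc, bwtArr, if_pos h])
    have hs : SA k - 1 < m.length := by have : SA k < m.length := hSA.SA_lt hkN; omega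
    exact ⟨hkN, hs, by rw [hright hs]; omega⟩
  rw [bwtArr_eq_letterArr hxy]
  refine Finset.card_nbij' (fun z => r (SA z + 1)) (fun k => r (SA k - 1)) ?_ ?_ ?_ ?_ <;>
    intro i hi <;> obtain ⟨hi, hic⟩ := Finset.mem_filter.1 hi
  · obtain ⟨hiN, hs⟩ := hz i hi hic
    have hSAr : SA (r (SA i + 1)) = SA i + 1 := hright hs
    refine Finset.mem_filter.2 ⟨Finset.mem_range.2 ?_, by rw [bwtArr_eq_letterArr hSAr, hic]⟩
    exact (hSA.lt_iff_lt_of_SA_eq_add_one hiN hy (hmaps hs) hx hSAr hxy hic).1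
      (Finset.mem_range.1 hi)
  · obtain ⟨hiN, hs, hSAr⟩ := hk i hi hic
    have hl : letterArr m SA (r (SA i - 1)) = letterArr m SA y := by
      rw [← bwtArr_eq_letterArr hSAr, hic]
    refine Finset.mem_filter.2 ⟨Finset.mem_range.2 ?_, hl⟩
    exact (hSA.lt_iff_lt_of_SA_eq_add_one (hmaps hs) hy hiN hx hSAr hxy hl).2
      (Finset.mem_range.1 hi)
  · obtain ⟨hiN, hs⟩ := hz i hi hic
    simp only [hright hs, Nat.add_sub_cancel, hleft hiN]
  · obtain ⟨hiN, -, hSAr⟩ := hk i hi hic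
    simp only [← hSAr, hleft hiN]

theorem LF_eq (hSA : IsSuffixArray m SA) (hm : m.getLast? = some ⊥)
    (hx : x < m.length) (hy : y < m.length) (hxy : SA x = SA y + 1)
    (hc : bwtArr m SA x ≠ ⊥) : LF m SA x = y := by
  rw [bwtArr_eq_letterArr hxy] at hc
  change Cfun m (bwtArr m SA x) + #{k ∈ Finset.range x | bwtArr m SA k = bwtArr m SA x} = y
  rw [← hSA.card_letterArr_eq_eq_card_bwtArr_eq hm hx hy hxy hc,
    bwtArr_eq_letterArr hxy, hSA.Cfun_add_card_letterArr_eq hy]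

end IsSuffixArray

end LastToFirst

section Arcs

variable [LinearOrder α] {m : List (WithBot α)} {SA : ℕ → ℕ} {u v : ℕ × ℕ} {a b : ℕ}

theorem strAt_eq_cons_of_SA_eq_add_one (ha : SA a < m.length) (h : SA b = SA a + 1)
    (hc : letterArr m SA a ≠ ⊥) : strAt m SA a = letterArr m SA a :: strAt m SA b := by
  rw [strAt, drop_eq_letterArr_cons ha, List.takeWhile_cons_of_pos (by simpa using hc), strAt, h]

namespace IsSuffixArray

theorem mem_AT_iff (hSA : IsSuffixArray m SA) (hm : m.getLast? = some ⊥)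
    (hu : u ∈ DecompBWT m SA) (hv : v ∈ DecompBWT m SA) :
    (u, v) ∈ AT m SA ↔ ∃ c, strAt m SA v.1 = c :: strAt m SA u.1 := by
  constructor
  · rintro ⟨-, -, x, hxu1, hxu2, hbx, hLFv1, hLFv2⟩
    have hxN : x < m.length := hxu2.trans_lt hu.2.1
    have h0 : SA x ≠ 0 := fun h => hbx (by rw [bwtArr, if_pos h])
    obtain ⟨y, hy, hyx⟩ := hSA.exists_SA_eq (show SA x - 1 < m.length by
      have : SA x < m.length := hSA.SA_lt hxN; omega)
    have hxy : SA x = SA y + 1 := by rw [hyx]; omega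
    rw [hSA.LF_eq hm hxN hy hxy hbx] at hLFv1 hLFv2
    rw [bwtArr_eq_letterArr hxy] at hbx
    refine ⟨letterArr m SA y, ?_⟩
    rw [← (hSA.mem_Icc_iff_strAt_eq hm hv hy).1 ⟨hLFv1, hLFv2⟩,
      ← (hSA.mem_Icc_iff_strAt_eq hm hu hxN).1 ⟨hxu1, hxu2⟩]
    exact strAt_eq_cons_of_SA_eq_add_one (hSA.SA_lt hy) hxy hbx
  · rintro ⟨c, hc⟩
    have hv1 : SA v.1 < m.length := hSA.SA_lt (fst_lt_length_of_mem_DecompBWT hv)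
    have hl : letterArr m SA v.1 ≠ ⊥ := fun hl => by
      simp [strAt, drop_eq_letterArr_cons hv1, hl] at hc
    obtain ⟨x, hx, hxv⟩ := hSA.exists_SA_eq (show SA v.1 + 1 < m.length from
      SA_add_one_lt_length hm hv1 hl)
    have hcons := strAt_eq_cons_of_SA_eq_add_one hv1 hxv hl
    rw [hc] at hcons
    obtain ⟨rfl, hxu⟩ := List.cons_eq_cons.1 hcons
    have hbx : bwtArr m SA x ≠ ⊥ := by rwa [bwtArr_eq_letterArr hxv]
    obtain ⟨hxu1, hxu2⟩ := (hSA.mem_Icc_iff_strAt_eq hm hu hx).2 hxu.symm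
    have hLF := hSA.LF_eq hm hx (fst_lt_length_of_mem_DecompBWT hv) hxv hbx
    exact ⟨hu, hv, x, hxu1, hxu2, hbx, hLF.ge, hLF.trans_le hv.1⟩

theorem failCand_iff_of_mem_DecompBWT (hSA : IsSuffixArray m SA) (hm : m.getLast? = some ⊥)
    (hu : u ∈ DecompBWT m SA) :
    FailCand m SA u.1 k ↔
      k < m.length ∧ strAt m SA k ≠ strAt m SA u.1 ∧ strAt m SA k <+: strAt m SA u.1 := by
  have hu1 := fst_lt_length_of_mem_DecompBWT hu
  rw [hSA.failCand_iff hu1]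
  refine ⟨fun ⟨hk, hpre⟩ => ⟨hk.trans hu1, fun h => ?_, hpre⟩,
    fun ⟨hk, hne, hpre⟩ => ⟨hSA.lt_of_strAt_prefix hm hk hu1 hpre hne, hpre⟩⟩
  exact not_le.2 hk ((hSA.mem_Icc_iff_strAt_eq hm hu (hk.trans hu1)).2 h).1

/-- Among prefixes of one word, a larger rank reads a longer word; so the largest failure
candidate reads the longest proper prefix. -/
theorem mem_AF_iff (hSA : IsSuffixArray m SA) (hm : m.getLast? = some ⊥)
    (hu : u ∈ DecompBWT m SA) (hv : v ∈ DecompBWT m SA) :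
    (u, v) ∈ AF m SA ↔
      strAt m SA u.1 ≠ strAt m SA v.1 ∧ strAt m SA v.1 <+: strAt m SA u.1 ∧
      ∀ k < m.length, strAt m SA k ≠ strAt m SA u.1 → strAt m SA k <+: strAt m SA u.1 →
        (strAt m SA k).length ≤ (strAt m SA v.1).length := by
  have hv1 := fst_lt_length_of_mem_DecompBWT hv
  have hcand := fun k => hSA.failCand_iff_of_mem_DecompBWT hm hu (k := k)
  constructor
  · rintro ⟨-, -, k, hkC, hkmax, hkv1, hkv2⟩
    have hkv := (hSA.mem_Icc_iff_strAt_eq hm hv ((hcand k).1 hkC).1).1 ⟨hkv1, hkv2⟩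
    obtain ⟨hk, hne, hpre⟩ := (hcand k).1 hkC
    refine ⟨fun h => hne (hkv.trans h.symm), hkv ▸ hpre, fun k' hk' hne' hpre' => ?_⟩
    by_contra! hlen
    rw [← hkv] at hlen
    have hkk' : strAt m SA k <+: strAt m SA k' :=
      List.prefix_of_prefix_length_le hpre hpre' hlen.le
    have := hSA.lt_of_strAt_prefix hm hk hk' hkk' (fun h => hlen.ne (by rw [h]))
    exact this.not_ge (hkmax k' ((hcand k').2 ⟨hk', hne', hpre'⟩))
  · rintro ⟨hne, hpre, hmax⟩
    classical
    have hv1C : FailCand m SA u.1 v.1 := (hcand v.1).2 ⟨hv1, Ne.symm hne, hpre⟩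
    set k := Nat.findGreatest (FailCand m SA u.1) u.1
    have hkC : FailCand m SA u.1 k := Nat.findGreatest_spec hv1C.1.le hv1C
    have hkmax : ∀ k', FailCand m SA u.1 k' → k' ≤ k := fun k' hk' =>
      Nat.le_findGreatest hk'.1.le hk'
    obtain ⟨hk, hkne, hkpre⟩ := (hcand k).1 hkC
    have hkv : strAt m SA k = strAt m SA v.1 := by
      by_contra hkv
      have hkv' := List.prefix_of_prefix_length_le hkpre hpre (hmax k hk hkne hkpre)
      exact (hSA.lt_of_strAt_prefix hm hk hv1 hkv' hkv).not_ge (hkmax v.1 hv1C)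
    obtain ⟨hkv1, hkv2⟩ := (hSA.mem_Icc_iff_strAt_eq hm hv hk).2 hkv
    exact ⟨hu, hv, k, hkC, hkmax, hkv1, hkv2⟩

end IsSuffixArray

end Arcs

theorem ACTedge_iff_eq_append_singleton {Pref : Set (List β)}
    (hPref : ∀ q ∈ Pref, ∀ r, r <+: q → r ∈ Pref) {p q : List β} (hp : p ∈ Pref)
    (hq : q ∈ Pref) : ACTedge Pref p q ↔ ∃ c, q = p ++ [c] := by
  constructor
  · rintro ⟨-, -, hne, ⟨r, rfl⟩, hmax⟩
    have hr : 0 < r.length := List.length_pos_iff.2 fun hr => hne (by simp [hr])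
    have hdrop := hmax _ (hPref _ hq _ (List.dropLast_prefix _))
      (fun h => by have := congrArg List.length h; simp at this; omega) (List.dropLast_prefix _)
    obtain ⟨c, rfl⟩ : ∃ c, r = [c] := List.length_eq_one_iff.1 <| by
      simp only [List.length_dropLast, List.length_append] at hdrop
      omega
    exact ⟨c, rfl⟩
  · rintro ⟨c, rfl⟩
    refine ⟨hp, hq, by simp, List.prefix_append _ _, fun r _ hne hr => ?_⟩
    have hlen := hr.length_le
    rw [List.length_append, List.length_singleton] at hlen
    by_contra! h
    exact hne (hr.eq_of_length (by simp; omega))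

section Reversed

variable [LinearOrder α] {P Q : OSS α} {SA : ℕ → ℕ} {u v : ℕ × ℕ}

theorem fwdPrefixes_eq_image (hQ : Q.strs = P.strs.map List.reverse)
    (hSA : IsSuffixArray (mP Q) SA) :
    fwdPrefixes P = (fun i => (strAt (mP Q) SA i).reverse) '' Set.Iio (mP Q).length := by
  ext q
  simp only [Set.mem_image, Set.mem_Iio, List.reverse_eq_iff]
  constructor
  · rintro ⟨t, ht, hq⟩
    have hsuf : q.reverse <:+ t.reverse.map sym := by
      rw [List.map_reverse]
      exact List.reverse_suffix.2 hq
    have hw := bot_notMem_of_suffix_map_sym hsuf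
    exact (hSA.exists_strAt_eq_iff (mP_getLast? Q) hw).2
      ((exists_drop_flatten_eq_iff hw Q.strs).2
        ⟨t.reverse, hQ ▸ List.mem_map_of_mem ht, hsuf⟩)
  · rintro ⟨i, hi, hiq⟩
    have hw : ⊥ ∉ q.reverse := hiq ▸ bot_notMem_strAt
    obtain ⟨s, hs, hsuf⟩ := (exists_drop_flatten_eq_iff hw Q.strs).1
      ((hSA.exists_strAt_eq_iff (mP_getLast? Q) hw).1 ⟨i, hi, hiq⟩)
    rw [hQ] at hs
    obtain ⟨t, ht, rfl⟩ := List.mem_map.1 hs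
    rw [List.map_reverse] at hsuf
    exact ⟨t, ht, List.reverse_suffix.1 hsuf⟩

theorem decPre_bijOn (hQ : Q.strs = P.strs.map List.reverse) (hSA : IsSuffixArray (mP Q) SA) :
    Set.BijOn (decPre (mP Q) SA) (DecompBWT (mP Q) SA) (fwdPrefixes P) := by
  rw [fwdPrefixes_eq_image hQ hSA]
  refine ⟨fun u hu =>
      ⟨u.1, fst_lt_length_of_mem_DecompBWT hu, (decPre_eq_reverse_strAt u).symm⟩,
    fun u hu v hv h => ?_, fun q ⟨i, hi, hiq⟩ => ?_⟩
  · rw [decPre_eq_reverse_strAt, decPre_eq_reverse_strAt, List.reverse_inj] at h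
    exact hSA.eq_of_strAt_eq (mP_getLast? Q) hu hv h
  · obtain ⟨u, hu, hui⟩ := hSA.exists_mem_DecompBWT (mP_getLast? Q) hi
    exact ⟨u, hu, by rw [decPre_eq_reverse_strAt, hui]; exact hiq⟩

theorem mem_AT_iff_ACTedge (hQ : Q.strs = P.strs.map List.reverse)
    (hSA : IsSuffixArray (mP Q) SA) (hu : u ∈ DecompBWT (mP Q) SA)
    (hv : v ∈ DecompBWT (mP Q) SA) :
    (u, v) ∈ AT (mP Q) SA ↔
      ACTedge (fwdPrefixes P) (decPre (mP Q) SA u) (decPre (mP Q) SA v) := by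
  have hclosed : ∀ q ∈ fwdPrefixes P, ∀ r, r <+: q → r ∈ fwdPrefixes P :=
    fun _ ⟨t, ht, hq⟩ _ hr => ⟨t, ht, hr.trans hq⟩
  rw [hSA.mem_AT_iff (mP_getLast? Q) hu hv, ACTedge_iff_eq_append_singleton hclosed
    ((decPre_bijOn hQ hSA).mapsTo hu) ((decPre_bijOn hQ hSA).mapsTo hv),
    decPre_eq_reverse_strAt, decPre_eq_reverse_strAt]
  simp only [← List.reverse_cons, List.reverse_inj]

theorem mem_AF_iff_ACFLedge (hQ : Q.strs = P.strs.map List.reverse)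
    (hSA : IsSuffixArray (mP Q) SA) (hu : u ∈ DecompBWT (mP Q) SA)
    (hv : v ∈ DecompBWT (mP Q) SA) :
    (u, v) ∈ AF (mP Q) SA ↔
      ACFLedge (fwdPrefixes P) (decPre (mP Q) SA u) (decPre (mP Q) SA v) := by
  rw [hSA.mem_AF_iff (mP_getLast? Q) hu hv, ACFLedge, fwdPrefixes_eq_image hQ hSA,
    decPre_eq_reverse_strAt, decPre_eq_reverse_strAt, Set.forall_mem_image]
  simp only [Set.mem_image, Set.mem_Iio, ne_eq, List.reverse_inj, List.reverse_suffix,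
    List.length_reverse]
  exact ⟨fun h => ⟨⟨u.1, fst_lt_length_of_mem_DecompBWT hu, rfl⟩,
    ⟨v.1, fst_lt_length_of_mem_DecompBWT hv, rfl⟩, h⟩, fun h => h.2.2⟩

end Reversed

theorem reversed_iso_ACT_ACFL_general [LinearOrder α] (P Q : OSS α)
    (hQ : Q.strs = P.strs.map List.reverse)
    (SA : ℕ → ℕ) (hSA : IsSuffixArray (mP Q) SA) :
    Set.BijOn (decPre (mP Q) SA) (DecompBWT (mP Q) SA) (fwdPrefixes P) ∧
    (∀ u v : ℕ × ℕ, u ∈ DecompBWT (mP Q) SA → v ∈ DecompBWT (mP Q) SA →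
      ((u, v) ∈ AT (mP Q) SA ↔
        ACTedge (fwdPrefixes P) (decPre (mP Q) SA u) (decPre (mP Q) SA v))) ∧
    (∀ u v : ℕ × ℕ, u ∈ DecompBWT (mP Q) SA → v ∈ DecompBWT (mP Q) SA →
      ((u, v) ∈ AF (mP Q) SA ↔
        ACFLedge (fwdPrefixes P) (decPre (mP Q) SA u) (decPre (mP Q) SA v))) :=
  ⟨decPre_bijOn hQ hSA, fun _ _ hu hv => mem_AT_iff_ACTedge hQ hSA hu hv,
    fun _ _ hu hv => mem_AF_iff_ACFLedge hQ hSA hu hv⟩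

/-- For the reversed ordered set of strings `←P` (set
`{reverse s : s ∈ P.S}` enumerated as `reverse t_1, …, reverse t_n`), `Dec_Pre` is a
bijection from `Decomp_BWT(←P)` onto `Prefix(P.S)`, under which `A_T(←P)` is the
longest-proper-prefix relation (so `(Decomp_BWT(←P), A_T(←P)) ≅ ACT(P.S)`) and
`A_F(←P)` is the longest-proper-suffix relation (so
`(Decomp_BWT(←P), A_F(←P)) ≅ ACFL(P.S)`). -/
theorem reversed_iso_ACT_ACFL [Fintype α] [LinearOrder α] (P Q : OSS α)
    (hQ : Q.strs = P.strs.map List.reverse)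
    (SA : ℕ → ℕ) (hSA : IsSuffixArray (mP Q) SA) :
    Set.BijOn (decPre (mP Q) SA) (DecompBWT (mP Q) SA) (fwdPrefixes P) ∧
    (∀ u v : ℕ × ℕ, u ∈ DecompBWT (mP Q) SA → v ∈ DecompBWT (mP Q) SA →
      ((u, v) ∈ AT (mP Q) SA ↔
        ACTedge (fwdPrefixes P) (decPre (mP Q) SA u) (decPre (mP Q) SA v))) ∧
    (∀ u v : ℕ × ℕ, u ∈ DecompBWT (mP Q) SA → v ∈ DecompBWT (mP Q) SA →
      ((u, v) ∈ AF (mP Q) SA ↔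
        ACFLedge (fwdPrefixes P) (decPre (mP Q) SA u) (decPre (mP Q) SA v))) :=
  reversed_iso_ACT_ACFL_general P Q hQ SA hSA

end BwtXbw
end

section
/- Let P be an ordered set of strings, let u = [i,j] ∈ Decomp_BWT(P) and put p = reverse(Dec_Pre[u]). Then the multiset {BWT(P)[k] : k ∈ [i,j]} equals the multiset obtained by taking, for each string s ∈ P.S having p as a suffix, the symbol s[|s| − |p|] if |s| > |p|, and the symbol $ if s = p. -/
namespace BwtXbw

variable {α β : Type*}

/-!
Let `p` be the `$`-free head of the suffix of rank `u.1`. Inside `u`, `LCP(P)[k] = LRS(P)[k]`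
says that the head of the suffix of rank `k` is a prefix of the suffix of rank `k - 1`; as `$`
sorts below every letter, that head cannot be a proper prefix of `p`, so every suffix with rank
in `u` begins with `p$`. Conversely, a suffix beginning with `p$` outside `u` would, by
sortedness, force the neighbour just outside `u` to begin with `p$` as well, contradicting the
maximality of `u`. Hence `SA` maps `u` onto the occurrences of `p$` in `m_P`; these are the ends
of the strings `s` having `p` as a suffix, and the BWT symbol there is the symbol of `s` before
`p`, or `$` when `s = p`.
-/

lemma length_le_lcpLen_iff_s8 [DecidableEq β] {w a b : List β} (hb : w <+: b) :
    w.length ≤ lcpLen a b ↔ w <+: a := by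
  induction w generalizing a b with
  | nil => simp
  | cons x w ih =>
    obtain ⟨b, rfl⟩ := hb
    cases a with
    | nil => simp [lcpLen]
    | cons y a =>
      by_cases hxy : y = x
      · subst hxy
        simpa [lcpLen] using ih (List.prefix_append w b)
      · simp [lcpLen, hxy, Ne.symm hxy]

lemma prefix_of_lex_of_lex {r : β → β → Prop} [Std.Asymm r] {w a b c : List β}
    (ha : w <+: a) (hc : w <+: c) (hab : List.Lex r a b) (hbc : List.Lex r b c) :
    w <+: b := by
  induction w generalizing a b c with
  | nil => exact List.nil_prefix
  | cons x w ih =>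
    obtain ⟨a, rfl⟩ := ha
    obtain ⟨c, rfl⟩ := hc
    cases hab with
    | cons hab =>
      cases hbc with
      | cons hbc => exact List.cons_prefix_cons.2 ⟨rfl, ih (List.prefix_append _ _)
          (List.prefix_append _ _) hab hbc⟩
      | rel hbc => exact absurd hbc (irrefl x)
    | rel hab =>
      cases hbc with
      | cons => exact absurd hab (irrefl x)
      | rel hbc => exact absurd hbc (asymm hab)

lemma filter_range_drop_eq [DecidableEq β] (x p : List β) :
    (Multiset.range (x.length + 1)).filter (fun q => x.drop q = p) =
      if p <:+ x then {x.length - p.length} else 0 := by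
  have hiff : ∀ q ∈ Multiset.range (x.length + 1),
      x.drop q = p ↔ q = x.length - p.length ∧ p <:+ x := by
    intro q hq
    rw [Multiset.mem_range] at hq
    constructor
    · rintro rfl
      exact ⟨by simp; omega, List.drop_suffix _ _⟩
    · rintro ⟨rfl, hpx⟩
      exact (List.suffix_iff_eq_drop.1 hpx).symm
  rw [Multiset.filter_congr hiff]
  split_ifs with hpx
  · have hlt : x.length - p.length < x.length + 1 := by omega
    simp only [hpx, and_true, Multiset.filter_eq',
      Multiset.count_eq_one_of_mem (Multiset.nodup_range _) (Multiset.mem_range.2 hlt)]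
    rfl
  · simp [hpx]

lemma coe_map_range'_eq_filter_range {f : ℕ → ℕ} {n i j : ℕ}
    (hf : Set.BijOn f (Set.Iio n) (Set.Iio n)) (hij : i ≤ j) (hjn : j < n)
    (Q : ℕ → Prop) [DecidablePred Q] (hQ : ∀ k < n, i ≤ k ∧ k ≤ j ↔ Q (f k)) :
    (((List.range' i (j - i + 1)).map f : List ℕ) : Multiset ℕ) =
      (Multiset.range n).filter Q := by
  have hnodup : ((List.range' i (j - i + 1)).map f).Nodup :=
    List.Nodup.map_on (fun x hx y hy hxy => hf.injOn
      (show x < n by rw [List.mem_range'_1] at hx; omega)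
      (show y < n by rw [List.mem_range'_1] at hy; omega) hxy) List.nodup_range'
  refine (Multiset.Nodup.ext (Multiset.coe_nodup.2 hnodup) ((Multiset.nodup_range n).filter Q)).2
    fun q => ?_
  simp only [Multiset.mem_coe, List.mem_map, List.mem_range'_1, Multiset.mem_filter,
    Multiset.mem_range]
  constructor
  · rintro ⟨k, hk, rfl⟩
    exact ⟨hf.mapsTo (show k < n by omega), (hQ k (by omega)).1 (by omega)⟩
  · rintro ⟨hq, hQq⟩
    obtain ⟨k, hk, rfl⟩ := hf.surjOn (show q ∈ Set.Iio n from hq)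
    have := (hQ k hk).2 hQq
    exact ⟨k, by omega, rfl⟩

section HeadWord

variable [DecidableEq α]

def headWord (l : List (WithBot α)) : List (WithBot α) :=
  l.takeWhile (fun c => decide (c ≠ ⊥))

lemma bot_notMem_headWord (l : List (WithBot α)) : ⊥ ∉ headWord l := fun h => by
  simpa using List.mem_takeWhile_imp h

lemma headWord_prefix (l : List (WithBot α)) : headWord l <+: l :=
  List.takeWhile_prefix _

lemma headWord_append {w : List (WithBot α)} (hw : ⊥ ∉ w) (l : List (WithBot α)) :
    headWord (w ++ l) = w ++ headWord l :=
  List.takeWhile_append_of_pos fun c hc => by simpa using ne_of_mem_of_not_mem hc hw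

lemma headWord_append_bot_cons {w : List (WithBot α)} (hw : ⊥ ∉ w) (r : List (WithBot α)) :
    headWord (w ++ ⊥ :: r) = w := by
  rw [headWord_append hw]
  simp [headWord]

lemma exists_eq_headWord_append_bot_cons {l : List (WithBot α)} (hl : ⊥ ∈ l) :
    ∃ r, l = headWord l ++ ⊥ :: r := by
  induction l with
  | nil => simp at hl
  | cons c l ih =>
    by_cases hc : c = ⊥
    · exact ⟨l, by simp [hc, headWord]⟩
    · obtain ⟨r, hr⟩ := ih (by simpa [Ne.symm hc] using hl)
      refine ⟨r, ?_⟩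
      rw [← List.singleton_append, headWord_append (by simpa [eq_comm] using hc),
        List.append_assoc, ← hr]

lemma append_bot_prefix_iff {p l : List (WithBot α)} (hp : ⊥ ∉ p) (hl : ⊥ ∈ l) :
    p ++ [⊥] <+: l ↔ headWord l = p := by
  constructor
  · rintro ⟨r, rfl⟩
    simpa using headWord_append_bot_cons hp r
  · intro h
    obtain ⟨r, hr⟩ := exists_eq_headWord_append_bot_cons hl
    exact ⟨r, by rw [hr, h]; simp⟩

lemma prefix_headWord_of_prefix {w l : List (WithBot α)} (hw : ⊥ ∉ w) (h : w <+: l) :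
    w <+: headWord l := by
  obtain ⟨r, rfl⟩ := h
  rw [headWord_append hw]
  exact List.prefix_append _ _

end HeadWord

lemma headWord_eq_of_lex [LinearOrder α] {p a b : List (WithBot α)} (hp : ⊥ ∉ p)
    (hb : ⊥ ∈ b) (ha : p ++ [⊥] <+: a) (hba : headWord b <+: a)
    (hab : List.Lex (· < ·) a b) : headWord b = p := by
  have hpa : headWord a = p := (append_bot_prefix_iff hp (ha.mem (by simp))).1 ha
  obtain ⟨t, ht⟩ : headWord b <+: p :=
    hpa ▸ prefix_headWord_of_prefix (bot_notMem_headWord b) hba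
  -- A proper prefix of `p` followed by `⊥` would sort `b` before `a`.
  by_contra hne
  have ht0 : t ≠ [] := by rintro rfl; exact hne (by simpa using ht)
  obtain ⟨x, t, rfl⟩ := List.exists_cons_of_ne_nil ht0
  obtain ⟨rb, hrb⟩ := exists_eq_headWord_append_bot_cons hb
  obtain ⟨ra, rfl⟩ := ha
  have hx : x ≠ ⊥ := by rintro rfl; exact hp (ht ▸ by simp)
  have hba : List.Lex (· < ·) b (p ++ [⊥] ++ ra) := by
    rw [hrb, ← ht]
    simpa using List.Lex.append_left _ (List.Lex.rel hx.bot_lt) (headWord b)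
  exact asymm hab hba

section SuffixArray

variable [LinearOrder α] {m : List (WithBot α)} {SA : ℕ → ℕ}

lemma lcpP_eq_lrs_iff {k : ℕ} (hk : k ≠ 0) :
    lcpP m SA k = lrs m SA k ↔ headWord (m.drop (SA k)) <+: m.drop (SA (k - 1)) := by
  rw [lcpP, if_neg hk, min_eq_right_iff]
  exact length_le_lcpLen_iff_s8 (headWord_prefix _)

lemma decPre_eq_reverse_headWord (u : ℕ × ℕ) :
    decPre m SA u = (headWord (m.drop (SA u.1))).reverse := by
  rw [decPre, lrs, ← List.prefix_iff_eq_take.1 (List.takeWhile_prefix _)]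
  rfl

lemma append_bot_prefix_drop_of_interior (hSA : IsSuffixArray m SA)
    (hsep : ∀ q < m.length, ⊥ ∈ m.drop q) {i j : ℕ} (hj : j < m.length)
    (hint : ∀ k, i < k → k ≤ j → lcpP m SA k = lrs m SA k) {k : ℕ} (hik : i ≤ k)
    (hkj : k ≤ j) :
    headWord (m.drop (SA i)) ++ [⊥] <+: m.drop (SA k) := by
  have hp := bot_notMem_headWord (m.drop (SA i))
  induction k, hik using Nat.le_induction with
  | base => exact (append_bot_prefix_iff hp (hsep _ (hSA.1.mapsTo (by grind)))).2 rfl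
  | succ k hik ih =>
    have hsep' := hsep _ (hSA.1.mapsTo (show k + 1 < m.length by omega))
    refine (append_bot_prefix_iff hp hsep').2 (headWord_eq_of_lex hp hsep' (ih (by omega)) ?_
      (hSA.2 k (k + 1) k.lt_succ_self (by omega)))
    exact (lcpP_eq_lrs_iff k.succ_ne_zero).1 (hint _ (by omega) hkj)

lemma left_le_of_append_bot_prefix_drop (hSA : IsSuffixArray m SA) {i k : ℕ}
    (hi : i < m.length) (hleft : i = 0 ∨ lcpP m SA i ≠ lrs m SA i)
    (hpk : headWord (m.drop (SA i)) ++ [⊥] <+: m.drop (SA k)) :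
    i ≤ k := by
  by_contra! hki
  refine hleft.elim (by omega) fun hne => hne ((lcpP_eq_lrs_iff (by omega)).2 ?_)
  rcases (show k ≤ i - 1 by omega).eq_or_lt with rfl | hk'
  · exact (List.prefix_append _ _).trans hpk
  · exact prefix_of_lex_of_lex ((List.prefix_append _ _).trans hpk) (headWord_prefix _)
      (hSA.2 k (i - 1) hk' (by omega)) (hSA.2 (i - 1) i (by omega) (by omega))

lemma le_right_of_append_bot_prefix_drop (hSA : IsSuffixArray m SA) {p : List (WithBot α)}
    (hp : ⊥ ∉ p) {j k : ℕ}
    (hright : j + 1 = m.length ∨ lcpP m SA (j + 1) ≠ lrs m SA (j + 1))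
    (hpj : p ++ [⊥] <+: m.drop (SA j)) (hk : k < m.length)
    (hpk : p ++ [⊥] <+: m.drop (SA k)) :
    k ≤ j := by
  by_contra! hjk
  have hpj' : p ++ [⊥] <+: m.drop (SA (j + 1)) := by
    rcases (show j + 1 ≤ k by omega).eq_or_lt with rfl | hk'
    · exact hpk
    · exact prefix_of_lex_of_lex hpj hpk (hSA.2 j (j + 1) j.lt_succ_self (by omega))
        (hSA.2 (j + 1) k hk' hk)
  have hhead := (append_bot_prefix_iff hp (hpj'.mem (by simp))).1 hpj'
  refine hright.elim (by omega) fun hne => hne ((lcpP_eq_lrs_iff j.succ_ne_zero).2 ?_)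
  rw [hhead]
  exact (List.prefix_append _ _).trans hpj

theorem mem_interval_iff_append_bot_prefix_drop (hSA : IsSuffixArray m SA)
    (hsep : ∀ q < m.length, ⊥ ∈ m.drop q) {u : ℕ × ℕ} (hu : u ∈ DecompBWT m SA)
    {k : ℕ} (hk : k < m.length) :
    u.1 ≤ k ∧ k ≤ u.2 ↔ headWord (m.drop (SA u.1)) ++ [⊥] <+: m.drop (SA k) := by
  obtain ⟨hij, hj, hint, hleft, hright⟩ := hu
  refine ⟨fun hik => append_bot_prefix_drop_of_interior hSA hsep hj hint hik.1 hik.2,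
    fun hpk => ⟨left_le_of_append_bot_prefix_drop hSA (by omega) hleft hpk, ?_⟩⟩
  exact le_right_of_append_bot_prefix_drop hSA (bot_notMem_headWord _) hright
    (append_bot_prefix_drop_of_interior hSA hsep hj hint hij le_rfl) hk hpk

end SuffixArray

def multiString (L : List (List α)) : List (WithBot α) :=
  (L.map (fun s => s.map sym ++ [⊥])).flatten

lemma multiString_cons (s : List α) (L : List (List α)) :
    multiString (s :: L) = s.map sym ++ ⊥ :: multiString L := by
  simp [multiString]

lemma bot_mem_drop_multiString {L : List (List α)} (hL : L ≠ []) {q : ℕ}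
    (hq : q < (multiString L).length) : ⊥ ∈ (multiString L).drop q := by
  obtain ⟨L, s, rfl⟩ := L.eq_nil_or_concat.resolve_left hL
  have hm : multiString (L.concat s) = (multiString L ++ s.map sym) ++ [⊥] := by
    simp [multiString]
  rw [hm] at hq ⊢
  rw [List.drop_append_of_le_length (by simp at hq ⊢; omega)]
  simp

-- `bwtArr m id q` is the symbol preceding position `q` of `m` (`$` at `q = 0`), so that
-- `bwtArr m SA = bwtArr m id ∘ SA` definitionally.
lemma bwtArr_id_append_of_le {a : List (WithBot α)} {q : ℕ} (hq : q ≤ a.length)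
    (b : List (WithBot α)) : bwtArr (a ++ b) id q = bwtArr a id q := by
  simp only [bwtArr, id]
  split_ifs
  · rfl
  · exact List.getD_append _ _ _ _ (by omega)

lemma bwtArr_id_append_bot_cons_add (a m : List (WithBot α)) (q : ℕ) :
    bwtArr (a ++ ⊥ :: m) id (a.length + 1 + q) = bwtArr m id q := by
  simp only [bwtArr, id]
  rcases Nat.eq_zero_or_pos q with rfl | hq
  · simp
  · rw [if_neg (by omega), if_neg (by omega), List.getD_append_right _ _ _ _ (by omega),
      show a.length + 1 + q - 1 - a.length = (q - 1) + 1 by omega]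
    simp

lemma map_bwtArr_filter_range_append_bot_cons [DecidableEq α] (s : List α)
    (m : List (WithBot α)) {p : List (WithBot α)} (hp : ⊥ ∉ p) :
    ((Multiset.range ((s.map sym).length + 1)).filter
        (fun q => p ++ [⊥] <+: (s.map sym ++ ⊥ :: m).drop q)).map
      (bwtArr (s.map sym ++ ⊥ :: m) id) =
      if p <:+ s.map sym then
        {if s.length = p.length then ⊥ else (s.map sym).getD (s.length - p.length - 1) ⊥}
      else 0 := by
  have hiff : ∀ q ∈ Multiset.range ((s.map sym).length + 1),
      p ++ [⊥] <+: (s.map sym ++ ⊥ :: m).drop q ↔ (s.map sym).drop q = p := by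
    intro q hq
    have hs : ⊥ ∉ (s.map sym).drop q := fun h => by
      simpa [sym] using List.mem_of_mem_drop h
    rw [List.drop_append_of_le_length (Nat.lt_succ_iff.1 (Multiset.mem_range.1 hq)),
      append_bot_prefix_iff hp (by simp), headWord_append_bot_cons hs]
  rw [Multiset.filter_congr hiff, filter_range_drop_eq]
  by_cases hps : p <:+ s.map sym
  · have hlen := hps.length_le
    rw [if_pos hps, if_pos hps, Multiset.map_singleton, bwtArr_id_append_of_le (by omega)]
    simp only [bwtArr, id, List.length_map] at hlen ⊢
    congr 1
    split_ifs <;> first | rfl | omega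
  · rw [if_neg hps, if_neg hps, Multiset.map_zero]

theorem map_bwtArr_filter_append_bot_prefix [DecidableEq α] (L : List (List α))
    {p : List (WithBot α)} (hp : ⊥ ∉ p) :
    ((Multiset.range (multiString L).length).filter
        (fun q => p ++ [⊥] <+: (multiString L).drop q)).map (bwtArr (multiString L) id) =
      (((L.filter (fun s => decide (p <:+ s.map sym))).map
        (fun s => if s.length = p.length then (⊥ : WithBot α)
          else (s.map sym).getD (s.length - p.length - 1) ⊥) : List (WithBot α)) :
        Multiset (WithBot α)) := by
  induction L with
  | nil => simp [multiString]
  | cons s L ih =>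
    have hdrop : ∀ q, (s.map sym ++ ⊥ :: multiString L).drop ((s.map sym).length + 1 + q) =
        (multiString L).drop q := fun q => by
      rw [show s.map sym ++ ⊥ :: multiString L = (s.map sym ++ [⊥]) ++ multiString L by simp,
        show (s.map sym).length + 1 + q = (s.map sym ++ [⊥]).length + q by simp,
        List.drop_length_add_append]
    have hlen : (s.map sym ++ ⊥ :: multiString L).length =
        (s.map sym).length + 1 + (multiString L).length := by
      simp only [List.length_append, List.length_cons]
      omega
    rw [multiString_cons, hlen, Multiset.range_add, Multiset.filter_add, Multiset.map_add,
      Multiset.filter_map, Multiset.map_map, map_bwtArr_filter_range_append_bot_cons s _ hp]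
    simp only [Function.comp_def, hdrop, bwtArr_id_append_bot_cons_add, ih, List.filter_cons]
    by_cases hps : p <:+ s.map sym <;> simp [hps]

theorem bwt_multiset_on_interval_general [LinearOrder α] (P : OSS α)
    (SA : ℕ → ℕ) (hSA : IsSuffixArray (mP P) SA)
    (u : ℕ × ℕ) (hu : u ∈ DecompBWT (mP P) SA) :
    (((List.range' u.1 (u.2 - u.1 + 1)).map (bwtArr (mP P) SA) :
        List (WithBot α)) : Multiset (WithBot α)) =
    (((P.strs.filter
          (fun s => decide ((decPre (mP P) SA u).reverse <:+ s.map sym))).map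
        (fun s =>
          if s.length = (decPre (mP P) SA u).length then (⊥ : WithBot α)
          else (s.map sym).getD (s.length - (decPre (mP P) SA u).length - 1) ⊥) :
        List (WithBot α)) : Multiset (WithBot α)) := by
  have hmP : mP P = multiString P.strs := rfl
  have hsep : ∀ q < (mP P).length, ⊥ ∈ (mP P).drop q := fun _ hq =>
    bot_mem_drop_multiString P.strs_ne hq
  set p := headWord ((mP P).drop (SA u.1))
  rw [decPre_eq_reverse_headWord, List.reverse_reverse, List.length_reverse]
  calc _ = ((((List.range' u.1 (u.2 - u.1 + 1)).map SA : List ℕ) : Multiset ℕ)).map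
        (bwtArr (mP P) id) := by rw [Multiset.map_coe, List.map_map]; rfl
    _ = ((Multiset.range (mP P).length).filter
          (fun q => p ++ [⊥] <+: (mP P).drop q)).map (bwtArr (mP P) id) := by
      rw [coe_map_range'_eq_filter_range hSA.1 hu.1 hu.2.1 (fun q => p ++ [⊥] <+: (mP P).drop q)
        fun k hk => mem_interval_iff_append_bot_prefix_drop hSA hsep hu hk]
    _ = _ := hmP ▸ map_bwtArr_filter_append_bot_prefix P.strs (bot_notMem_headWord _)

/-- With `p = reverse(Dec_Pre[u])`, the multiset
`{BWT(P)[k] : k ∈ u}` equals the multiset of, for each `s ∈ P.S` having `p` as a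
suffix, the symbol of `s` just before this suffix occurrence (`$` when `s = p`). -/
theorem bwt_multiset_on_interval [Fintype α] [LinearOrder α] (P : OSS α)
    (SA : ℕ → ℕ) (hSA : IsSuffixArray (mP P) SA)
    (u : ℕ × ℕ) (hu : u ∈ DecompBWT (mP P) SA) :
    (((List.range' u.1 (u.2 - u.1 + 1)).map (bwtArr (mP P) SA) :
        List (WithBot α)) : Multiset (WithBot α)) =
    (((P.strs.filter
          (fun s => decide ((decPre (mP P) SA u).reverse <:+ s.map sym))).map
        (fun s =>
          if s.length = (decPre (mP P) SA u).length then (⊥ : WithBot α)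
          else (s.map sym).getD (s.length - (decPre (mP P) SA u).length - 1) ⊥) :
        List (WithBot α)) : Multiset (WithBot α)) :=
  bwt_multiset_on_interval_general P SA hSA u hu

end BwtXbw
end

section
/- Let T be an array of n symbols of a finite alphabet Σ and let D be an interval partition of [1,n] with blocks u_1 < … < u_m such that for every block the symbols of T on that block are pairwise distinct. Suppose that for every i ∈ [1, m−1] the intersection B(T,D)[i] of the symbol sets of T on u_i and on u_{i+1} has cardinality at least 2. Then there exists an array T' valid for (T,D) with d_A(T',D) = n − m; in particular the minimum of d_A(·,D) over arrays valid for (T,D) equals n − m. -/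
namespace BwtXbw

variable {α β : Type*}

/-!
Since each block is duplicate-free, any arrangement of a block has exactly `|b| - 1` internal
mismatches, and concatenation never removes mismatches; this gives the lower bound `n - m`.
For the upper bound, arrange the blocks from left to right so that each block starts with the
symbol its predecessor ends with: if block `b` must start with `c`, choose a symbol `d ≠ c` shared
by `b` and the next block (possible since they share two symbols), end `b` with `d` and start
the next block with `d`. Then no mismatch occurs at any block boundary.
-/

section dA

variable [DecidableEq β]

theorem dA_cons_cons (a b : β) (t : List β) :
    dA (a :: b :: t) = (if a = b then 0 else 1) + dA (b :: t) := rfl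

theorem dA_append_cons (xs : List β) (y : β) (ys : List β) :
    dA (xs ++ y :: ys) = dA (xs ++ [y]) + dA (y :: ys) := by
  induction xs with
  | nil => simp [dA]
  | cons a xs ih =>
    cases xs with
    | nil => cases ys <;> simp [dA]
    | cons b t =>
      simp only [List.cons_append, dA_cons_cons] at ih ⊢
      omega

theorem dA_append_cons_cons_self (xs : List β) (y : β) (ys : List β) :
    dA (xs ++ y :: y :: ys) = dA (xs ++ [y]) + dA (y :: ys) := by
  rw [dA_append_cons, dA_cons_cons, if_pos rfl, Nat.zero_add]

theorem dA_le_dA_append_singleton (xs : List β) (y : β) : dA xs ≤ dA (xs ++ [y]) := by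
  induction xs with
  | nil => exact Nat.zero_le _
  | cons a xs ih =>
    cases xs with
    | nil => exact Nat.zero_le _
    | cons b t =>
      simp only [List.cons_append, dA_cons_cons] at ih ⊢
      omega

theorem dA_add_dA_le_dA_append (xs ys : List β) : dA xs + dA ys ≤ dA (xs ++ ys) := by
  cases ys with
  | nil => simp [dA]
  | cons y t =>
    rw [dA_append_cons]
    exact Nat.add_le_add_right (dA_le_dA_append_singleton xs y) _

theorem dA_eq_length_sub_one_of_nodup {l : List β} (h : l.Nodup) : dA l = l.length - 1 := by
  induction l with
  | nil => rfl
  | cons a l ih =>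
    cases l with
    | nil => rfl
    | cons b t =>
      have hab : a ≠ b := fun hab => (List.nodup_cons.1 h).1 (hab ▸ List.mem_cons_self)
      rw [dA_cons_cons, if_neg hab, ih h.of_cons]
      simp only [List.length_cons]
      omega

end dA

section ValidArr

variable [DecidableEq β]

theorem validArr_nil : ValidArr ([] : List (List β)) [] := ⟨[], .nil, rfl⟩

theorem validArr_cons_iff {b : List β} {B : List (List β)} {T : List β} :
    ValidArr (b :: B) T ↔ ∃ b' T₀, (b.length = b'.length ∧ b.toFinset = b'.toFinset) ∧
      ValidArr B T₀ ∧ T = b' ++ T₀ := by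
  constructor
  · rintro ⟨_, hB, rfl⟩
    cases hB with
    | cons hb hB => exact ⟨_, _, hb, ⟨_, hB, rfl⟩, rfl⟩
  · rintro ⟨b', _, hb, ⟨B', hB, rfl⟩, rfl⟩
    exact ⟨b' :: B', .cons hb hB, rfl⟩

theorem ValidArr.cons_of_perm {b b' : List β} {B : List (List β)} {T : List β}
    (hp : b.Perm b') (h : ValidArr B T) : ValidArr (b :: B) (b' ++ T) :=
  validArr_cons_iff.2 ⟨b', T, ⟨hp.length_eq, List.toFinset_eq_of_perm _ _ hp⟩, h, rfl⟩

theorem nodup_of_length_eq_of_toFinset_eq {b b' : List β} (hb : b.Nodup)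
    (hlen : b.length = b'.length) (hfin : b.toFinset = b'.toFinset) : b'.Nodup := by
  have : b'.toFinset.card = b'.length := by
    rw [← hfin, List.toFinset_card_of_nodup hb, hlen]
  exact Multiset.toFinset_card_eq_card_iff_nodup.1 this

theorem ValidArr.flatten_length_sub_length_le_dA {B : List (List β)} {T : List β}
    (hnd : ∀ b ∈ B, b.Nodup) (h : ValidArr B T) : B.flatten.length - B.length ≤ dA T := by
  induction B generalizing T with
  | nil => exact Nat.zero_le _
  | cons b B ih =>
    obtain ⟨b', T₀, ⟨hlen, hfin⟩, hT₀, rfl⟩ := validArr_cons_iff.1 h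
    have hb' : dA b' = b.length - 1 := by
      rw [dA_eq_length_sub_one_of_nodup <|
        nodup_of_length_eq_of_toFinset_eq (hnd b List.mem_cons_self) hlen hfin, hlen]
    have hrest := ih (fun x hx => hnd x (List.mem_cons_of_mem _ hx)) hT₀
    have hsplit := dA_add_dA_le_dA_append b' T₀
    simp only [List.flatten_cons, List.length_append, List.length_cons]
    omega

theorem exists_validArr_cons_dA_add_length_eq {b : List β} {B : List (List β)}
    (hnd : ∀ x ∈ b :: B, x.Nodup)
    (hchain : (b :: B).IsChain fun x y => 2 ≤ (x.toFinset ∩ y.toFinset).card)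
    {c : β} (hc : c ∈ b) :
    ∃ t, ValidArr (b :: B) (c :: t) ∧
      dA (c :: t) + (b :: B).length = (b :: B).flatten.length := by
  induction B generalizing b c with
  | nil =>
    have hp := List.perm_cons_erase hc
    refine ⟨b.erase c, by simpa using ValidArr.cons_of_perm hp validArr_nil, ?_⟩
    rw [dA_eq_length_sub_one_of_nodup (hp.nodup_iff.1 (hnd b List.mem_cons_self)), ← hp.length_eq]
    simp only [List.length_cons, List.length_nil, List.flatten_cons, List.flatten_nil,
      List.append_nil]
    have := List.length_pos_of_mem hc
    omega
  | cons b₂ B ih =>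
    obtain ⟨d, hd, hdc⟩ := Finset.exists_mem_ne (List.isChain_cons_cons.1 hchain).1 c
    simp only [Finset.mem_inter, List.mem_toFinset] at hd
    obtain ⟨t, hvalid, hdA⟩ := ih (fun x hx => hnd x (List.mem_cons_of_mem _ hx))
      (List.isChain_cons_cons.1 hchain).2 hd.2
    set l := (b.erase c).erase d
    have hp : b.Perm (c :: l ++ [d]) :=
      (List.perm_cons_erase hc).trans <| .cons c <|
        (List.perm_cons_erase ((List.mem_erase_of_ne hdc).2 hd.1)).trans
          (List.perm_append_singleton d l).symm
    refine ⟨l ++ d :: d :: t, by simpa using ValidArr.cons_of_perm hp hvalid, ?_⟩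
    have hblock : dA (c :: l ++ [d]) = b.length - 1 := by
      rw [dA_eq_length_sub_one_of_nodup (hp.nodup_iff.1 (hnd b List.mem_cons_self)), ← hp.length_eq]
    have := List.length_pos_of_mem hc
    rw [← List.cons_append, dA_append_cons_cons_self, hblock]
    simp only [List.length_cons, List.flatten_cons, List.length_append] at hdA ⊢
    omega

end ValidArr

theorem dA_min_attained_general [DecidableEq β] (B : List (List β))
    (hne : ∀ b ∈ B, b ≠ []) (hnd : ∀ b ∈ B, b.Nodup)
    (hint : ∀ i, i + 1 < B.length →
      2 ≤ ((B.getD i []).toFinset ∩ (B.getD (i + 1) []).toFinset).card) :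
    (∃ T' : List β, ValidArr B T' ∧ dA T' = B.flatten.length - B.length) ∧
    ∀ T'' : List β, ValidArr B T'' → B.flatten.length - B.length ≤ dA T'' := by
  refine ⟨?_, fun T h => h.flatten_length_sub_length_le_dA hnd⟩
  cases B with
  | nil => exact ⟨[], validArr_nil, rfl⟩
  | cons b B =>
    have hchain : (b :: B).IsChain fun x y => 2 ≤ (x.toFinset ∩ y.toFinset).card :=
      List.isChain_iff_getElem.2 fun i hi => by
        simpa only [List.getD_eq_getElem _ _ (Nat.lt_of_succ_lt hi), List.getD_eq_getElem _ _ hi]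
          using hint i hi
    obtain ⟨c, hc⟩ := List.exists_mem_of_ne_nil b (hne b List.mem_cons_self)
    obtain ⟨t, hvalid, hdA⟩ := exists_validArr_cons_dA_add_length_eq hnd hchain hc
    exact ⟨c :: t, hvalid, by omega⟩

/-- If any two consecutive blocks of `B` share at least two symbols,
then some valid array attains `d_A = n − m`; in particular the minimum of `d_A` over
valid arrays equals `n − m`. -/
theorem dA_min_attained [Fintype β] [DecidableEq β] (B : List (List β))
    (hne : ∀ b ∈ B, b ≠ []) (hnd : ∀ b ∈ B, b.Nodup)
    (hint : ∀ i, i + 1 < B.length →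
      2 ≤ ((B.getD i []).toFinset ∩ (B.getD (i + 1) []).toFinset).card) :
    (∃ T' : List β, ValidArr B T' ∧ dA T' = B.flatten.length - B.length) ∧
    ∀ T'' : List β, ValidArr B T'' → B.flatten.length - B.length ≤ dA T'' :=
  dA_min_attained_general B hne hnd hint

end BwtXbw
end

section
/- Let T be an array of n symbols of a finite alphabet Σ and let D be an interval partition of [1,n] with blocks u_1 < … < u_m such that on every block the symbols of T are pairwise distinct. Suppose for some i ∈ [1, m−1] the symbol sets of T on u_i = [p,q] and on u_{i+1} = [q+1, q'] are disjoint. If T'_1 is optimal for (T[1..q], {u_1, …, u_i}) and T'_2 is optimal for (T[q+1..n], {u_{i+1}, …, u_m} reindexed to start at 1), then the concatenation T'_1 followed by T'_2 is optimal for (T, D). -/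
namespace BwtXbw

variable {α β : Type*}

section Arrays

variable [DecidableEq β]

theorem dA_concat_append_cons (s : List β) (x y : β) (t : List β) :
    dA (s ++ [x] ++ y :: t) = dA (s ++ [x]) + (if x = y then 0 else 1) + dA (y :: t) := by
  induction s with
  | nil => simp [dA]
  | cons a s ih =>
    cases s with
    | nil => simp only [List.cons_append, List.nil_append, dA, add_zero]; omega
    | cons b s => simp only [List.cons_append, dA] at ih ⊢; omega

theorem dA_append_of_getLast?_of_head? {s t : List β} {x y : β} (hs : s.getLast? = some x)
    (ht : t.head? = some y) : dA (s ++ t) = dA s + (if x = y then 0 else 1) + dA t := by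
  obtain ⟨s, rfl⟩ := List.getLast?_eq_some_iff.mp hs
  obtain ⟨t, rfl⟩ := List.head?_eq_some_iff.mp ht
  exact dA_concat_append_cons s x y t

theorem ValidArr.append {A C : List (List β)} {T₁ T₂ : List β} (h₁ : ValidArr A T₁)
    (h₂ : ValidArr C T₂) : ValidArr (A ++ C) (T₁ ++ T₂) := by
  obtain ⟨A', hA, rfl⟩ := h₁
  obtain ⟨C', hC, rfl⟩ := h₂
  exact ⟨A' ++ C', List.rel_append hA hC, List.flatten_append⟩

theorem ValidArr.exists_append {A C : List (List β)} {T : List β} (h : ValidArr (A ++ C) T) :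
    ∃ T₁ T₂, T = T₁ ++ T₂ ∧ ValidArr A T₁ ∧ ValidArr C T₂ := by
  obtain ⟨B', hB, rfl⟩ := h
  refine ⟨(B'.take A.length).flatten, (B'.drop A.length).flatten, ?_,
    ⟨_, ?_, rfl⟩, ⟨_, ?_, rfl⟩⟩
  · rw [← List.flatten_append, List.take_append_drop]
  · simpa using List.forall₂_take A.length hB
  · simpa using List.forall₂_drop A.length hB

theorem validArr_singleton_iff {b T : List β} :
    ValidArr [b] T ↔ b.length = T.length ∧ b.toFinset = T.toFinset := by
  constructor
  · rintro ⟨B', hB, rfl⟩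
    obtain ⟨b', L, hbb', hL, rfl⟩ := List.forall₂_cons_left_iff.mp hB
    simpa [List.forall₂_nil_left_iff.mp hL] using hbb'
  · exact fun h => ⟨[T], List.Forall₂.cons h List.Forall₂.nil, List.flatten_singleton⟩

theorem ValidArr.exists_mem_getLast? {A : List (List β)} {b T : List β} (hb : b ≠ [])
    (h : ValidArr (A ++ [b]) T) : ∃ x ∈ b, T.getLast? = some x := by
  obtain ⟨T₁, T₂, rfl, -, hT₂⟩ := h.exists_append
  obtain ⟨hlen, hset⟩ := validArr_singleton_iff.mp hT₂
  have hT₂ : T₂ ≠ [] := by rintro rfl; simp_all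
  refine ⟨T₂.getLast hT₂, ?_, ?_⟩
  · simpa [← List.mem_toFinset, hset] using List.getLast_mem hT₂
  · simp [List.getLast?_append, List.getLast?_eq_some_getLast hT₂]

theorem ValidArr.exists_mem_head? {C : List (List β)} {b T : List β} (hb : b ≠ [])
    (h : ValidArr (b :: C) T) : ∃ y ∈ b, T.head? = some y := by
  rw [← List.singleton_append] at h
  obtain ⟨T₁, T₂, rfl, hT₁, -⟩ := h.exists_append
  obtain ⟨hlen, hset⟩ := validArr_singleton_iff.mp hT₁
  have hT₁ : T₁ ≠ [] := by rintro rfl; simp_all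
  refine ⟨T₁.head hT₁, ?_, ?_⟩
  · simpa [← List.mem_toFinset, hset] using List.head_mem hT₁
  · simp [List.head?_append, List.head?_eq_some_head hT₁]

theorem dA_append_of_validArr_of_disjoint {A C : List (List β)} {b c T₁ T₂ : List β}
    (hb : b ≠ []) (hc : c ≠ []) (hbc : Disjoint b.toFinset c.toFinset)
    (h₁ : ValidArr (A ++ [b]) T₁) (h₂ : ValidArr (c :: C) T₂) :
    dA (T₁ ++ T₂) = dA T₁ + 1 + dA T₂ := by
  obtain ⟨x, hxb, hx⟩ := h₁.exists_mem_getLast? hb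
  obtain ⟨y, hyc, hy⟩ := h₂.exists_mem_head? hc
  have hxy : x ≠ y := by
    rintro rfl
    exact Finset.disjoint_left.mp hbc (List.mem_toFinset.mpr hxb) (List.mem_toFinset.mpr hyc)
  rw [dA_append_of_getLast?_of_head? hx hy, if_neg hxy]

end Arrays

theorem optimal_split_disjoint_general [DecidableEq β]
    (B₁ B₂ : List (List β)) (bi bj : List β)
    (hne : ∀ b ∈ B₁ ++ bi :: bj :: B₂, b ≠ [])
    (hdisj : bi.toFinset ∩ bj.toFinset = ∅)
    (T₁' T₂' : List β)
    (h₁ : OptimalArr (B₁ ++ [bi]) T₁') (h₂ : OptimalArr (bj :: B₂) T₂') :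
    OptimalArr (B₁ ++ bi :: bj :: B₂) (T₁' ++ T₂') := by
  have hbi : bi ≠ [] := hne bi (by simp)
  have hbj : bj ≠ [] := hne bj (by simp)
  have hdisj' := Finset.disjoint_iff_inter_eq_empty.mpr hdisj
  -- every valid array pays exactly one mismatch at the disjoint boundary
  have hcost {T₁ T₂ : List β} (hT₁ : ValidArr (B₁ ++ [bi]) T₁)
      (hT₂ : ValidArr (bj :: B₂) T₂) :
      dA (T₁ ++ T₂) = dA T₁ + 1 + dA T₂ :=
    dA_append_of_validArr_of_disjoint hbi hbj hdisj' hT₁ hT₂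
  rw [show B₁ ++ bi :: bj :: B₂ = (B₁ ++ [bi]) ++ bj :: B₂ by simp]
  refine ⟨h₁.1.append h₂.1, fun T hT => ?_⟩
  obtain ⟨T₁, T₂, rfl, hT₁, hT₂⟩ := hT.exists_append
  rw [hcost h₁.1 h₂.1, hcost hT₁ hT₂]
  have := h₁.2 T₁ hT₁
  have := h₂.2 T₂ hT₂
  omega

/-- Splitting between two consecutive blocks `bi`, `bj` with disjoint
symbol sets: if `T₁'` is optimal for the blocks up to `bi` and `T₂'` is optimal for the
blocks from `bj` on, then `T₁' ++ T₂'` is optimal for the whole decomposition. -/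
theorem optimal_split_disjoint [Fintype β] [DecidableEq β]
    (B₁ B₂ : List (List β)) (bi bj : List β)
    (hne : ∀ b ∈ B₁ ++ bi :: bj :: B₂, b ≠ [])
    (hnd : ∀ b ∈ B₁ ++ bi :: bj :: B₂, b.Nodup)
    (hdisj : bi.toFinset ∩ bj.toFinset = ∅)
    (T₁' T₂' : List β)
    (h₁ : OptimalArr (B₁ ++ [bi]) T₁') (h₂ : OptimalArr (bj :: B₂) T₂') :
    OptimalArr (B₁ ++ bi :: bj :: B₂) (T₁' ++ T₂') :=
  optimal_split_disjoint_general B₁ B₂ bi bj hne hdisj T₁' T₂' h₁ h₂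

end BwtXbw
end
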